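/- arXiv:2404.17518 — 2 statements merged into one kernel-verified Lean document; each statement's English description precedes it below -/
import Mathlib

section
/- Let 𝔡 be a metrized Lie algebra and 𝔠 ⊆ 𝔡 a coisotropic subalgebra (𝔠^⊥ ⊆ 𝔠), with quotient map π: 𝔠 → 𝔡' = 𝔠/𝔠^⊥. Then the fiber product 𝔩_𝔠 = {(ζ₁,ζ₂) ∈ 𝔠 × 𝔠 : π(ζ₁) = π(ζ₂)} is a Lagrangian Lie subalgebra of 𝔡̄ ⊕ 𝔡 (the direct sum with bilinear form ⟨(x₁,x₂),(y₁,y₂)⟩ = −⟨x₁,y₁⟩ + ⟨x₂,y₂⟩). -/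
/-- The orthogonal complement of a subspace with respect to a bilinear form. -/
def orth {V : Type*} [AddCommGroup V] [Module ℝ V]
    (B : V →ₗ[ℝ] V →ₗ[ℝ] ℝ) (W : Submodule ℝ V) : Submodule ℝ V where
  carrier := {x | ∀ w ∈ W, B x w = 0}
  add_mem' := by
    intro a b ha hb w hw
    simp only [Set.mem_setOf_eq] at *
    rw [map_add, LinearMap.add_apply, ha w hw, hb w hw, add_zero]
  zero_mem' := by intro w hw; simp
  smul_mem' := by
    intro c a ha w hw
    simp only [Set.mem_setOf_eq] at *
    rw [map_smul, LinearMap.smul_apply, ha w hw, smul_zero]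

/-!
In `𝔡̄ ⊕ 𝔡` the form pairs `(x₁, x₂)` with `(y₁, y₂)` to `-⟨x₁ - x₂, y₁⟩ - ⟨y₁ - y₂, x₂⟩`, so two
pairs of elements of `𝔠` whose differences lie in `𝔨 = 𝔠^⊥` are orthogonal. Conversely, pairing
with `(k, 0)` and `(0, k)` for `k ∈ 𝔨` puts both components in `𝔨^⊥ = 𝔠` (nondegeneracy and
finite dimension), and pairing with the diagonal `(w, w)`, `w ∈ 𝔠`, puts the difference in `𝔨`.
Closure under the bracket holds because invariance makes `𝔨` an ideal of `𝔠`.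
-/

section FiberProd

variable {R M : Type*} [Ring R] [AddCommGroup M] [Module R M]

/-- Pairs in `C × C` with the same image in `C ⧸ K`; for `K = 𝔠^⊥` this is `𝔩_𝔠`. -/
def fiberProd (C K : Submodule R M) : Submodule R (M × M) where
  carrier := {p | p.1 ∈ C ∧ p.2 ∈ C ∧ p.1 - p.2 ∈ K}
  add_mem' := by
    rintro p q ⟨hp₁, hp₂, hp⟩ ⟨hq₁, hq₂, hq⟩
    refine ⟨C.add_mem hp₁ hq₁, C.add_mem hp₂ hq₂, ?_⟩
    simpa only [Prod.fst_add, Prod.snd_add, add_sub_add_comm] using K.add_mem hp hq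
  zero_mem' := ⟨C.zero_mem, C.zero_mem, by simp⟩
  smul_mem' := by
    rintro c p ⟨hp₁, hp₂, hp⟩
    refine ⟨C.smul_mem c hp₁, C.smul_mem c hp₂, ?_⟩
    simpa only [Prod.smul_fst, Prod.smul_snd, smul_sub] using K.smul_mem c hp

end FiberProd

theorem lie_mem_fiberProd {R L : Type*} [CommRing R] [LieRing L] [LieAlgebra R L]
    {C : LieSubalgebra R L} {K : Submodule R L} (hK : ∀ c ∈ C, ∀ k ∈ K, ⁅c, k⁆ ∈ K)
    {p q : L × L} (hp : p ∈ fiberProd C.toSubmodule K) (hq : q ∈ fiberProd C.toSubmodule K) :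
    (⁅p.1, q.1⁆, ⁅p.2, q.2⁆) ∈ fiberProd C.toSubmodule K := by
  obtain ⟨hp₁, hp₂, hp⟩ := hp
  obtain ⟨hq₁, hq₂, hq⟩ := hq
  refine ⟨C.lie_mem hp₁ hq₁, C.lie_mem hp₂ hq₂, ?_⟩
  have hsplit : ⁅p.1, q.1⁆ - ⁅p.2, q.2⁆ = -⁅q.1, p.1 - p.2⁆ + ⁅p.2, q.1 - q.2⁆ := by
    rw [lie_sub, lie_sub, ← lie_skew q.1 p.1, ← lie_skew q.1 p.2]
    abel
  show ⁅p.1, q.1⁆ - ⁅p.2, q.2⁆ ∈ K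
  rw [hsplit]
  exact K.add_mem (K.neg_mem (hK _ hq₁ _ hp)) (hK _ hp₂ _ hq)

section Orth

variable {V : Type*} [AddCommGroup V] [Module ℝ V] {B : LinearMap.BilinForm ℝ V}

theorem orth_eq_orthogonal (hB : B.IsRefl) (W : Submodule ℝ V) : orth B W = B.orthogonal W := by
  ext x
  exact ⟨fun hx w hw => hB _ _ (hx w hw), fun hx w hw => hB _ _ (hx w hw)⟩

theorem orth_orth [FiniteDimensional ℝ V] (hB : B.Nondegenerate) (hB₀ : B.IsRefl)
    (W : Submodule ℝ V) : orth B (orth B W) = W := by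
  rw [orth_eq_orthogonal hB₀, orth_eq_orthogonal hB₀,
    LinearMap.BilinForm.orthogonal_orthogonal hB hB₀]

theorem isOrtho_of_mem_fiberProd_orth (hB : B.IsSymm) {C : Submodule ℝ V} {p q : V × V}
    (hp : p ∈ fiberProd C (orth B C)) (hq : q ∈ fiberProd C (orth B C)) :
    -(B p.1 q.1) + B p.2 q.2 = 0 := by
  obtain ⟨-, hp₂, hp⟩ := hp
  obtain ⟨hq₁, -, hq⟩ := hq
  have h₁ : B (p.1 - p.2) q.1 = 0 := hp _ hq₁
  have h₂ : B (q.1 - q.2) p.2 = 0 := hq _ hp₂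
  simp only [map_sub, LinearMap.sub_apply, hB.eq q.1 p.2, hB.eq q.2 p.2] at h₁ h₂
  linarith

theorem mem_fiberProd_orth_of_isOrtho {C : Submodule ℝ V} (hco : orth B C ≤ C)
    (hC : orth B (orth B C) = C) {p : V × V}
    (h : ∀ q ∈ fiberProd C (orth B C), -(B p.1 q.1) + B p.2 q.2 = 0) :
    p ∈ fiberProd C (orth B C) := by
  have hfst : p.1 ∈ orth B (orth B C) := fun k hk => by
    simpa using h (k, 0) ⟨hco hk, C.zero_mem, by simpa using hk⟩
  have hsnd : p.2 ∈ orth B (orth B C) := fun k hk => by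
    simpa using h (0, k) ⟨C.zero_mem, hco hk, by simpa using (orth B C).neg_mem hk⟩
  rw [hC] at hfst hsnd
  refine ⟨hfst, hsnd, fun w hw => ?_⟩
  have hdiag := h (w, w) ⟨hw, hw, by simp⟩
  rw [map_sub, LinearMap.sub_apply]
  linarith

theorem lie_mem_orth {L : Type*} [LieRing L] [LieAlgebra ℝ L] {B : LinearMap.BilinForm ℝ L}
    (hinv : ∀ x y z : L, B ⁅x, y⁆ z + B y ⁅x, z⁆ = 0) {C : LieSubalgebra ℝ L} {c k : L}
    (hc : c ∈ C) (hk : k ∈ orth B C.toSubmodule) : ⁅c, k⁆ ∈ orth B C.toSubmodule := fun w hw => by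
  have hkw : B k ⁅c, w⁆ = 0 := hk _ (C.lie_mem hc hw)
  linarith [hinv c k w]

end Orth

/-- For a coisotropic subalgebra 𝔠 ⊆ 𝔡 (𝔠^⊥ ⊆ 𝔠), the fiber product
𝔩_𝔠 = {(ζ₁,ζ₂) ∈ 𝔠 × 𝔠 : ζ₁ − ζ₂ ∈ 𝔠^⊥} (pairs with the same image in 𝔡' = 𝔠/𝔠^⊥) is a
Lagrangian Lie subalgebra of 𝔡̄ ⊕ 𝔡, with the form ⟨(x₁,x₂),(y₁,y₂)⟩ = −⟨x₁,y₁⟩ + ⟨x₂,y₂⟩.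
(Membership in 𝔩_𝔠 is the predicate P; "Lagrangian" is the statement that P holds exactly
for the elements orthogonal to all elements satisfying P.) -/
theorem stmt16 (𝔡 : Type*) [LieRing 𝔡] [LieAlgebra ℝ 𝔡] [FiniteDimensional ℝ 𝔡]
    (B : 𝔡 →ₗ[ℝ] 𝔡 →ₗ[ℝ] ℝ)
    (hsymm : ∀ x y : 𝔡, B x y = B y x)
    (hnondeg : ∀ x : 𝔡, (∀ y : 𝔡, B x y = 0) → x = 0)
    (hinv : ∀ x y z : 𝔡, B ⁅x, y⁆ z + B y ⁅x, z⁆ = 0)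
    (𝔠 : LieSubalgebra ℝ 𝔡) (hco : orth B 𝔠.toSubmodule ≤ 𝔠.toSubmodule) :
    let P : 𝔡 × 𝔡 → Prop := fun p =>
      p.1 ∈ 𝔠 ∧ p.2 ∈ 𝔠 ∧ p.1 - p.2 ∈ orth B 𝔠.toSubmodule
    -- 𝔩_𝔠 is a linear subspace …
    (∀ p q : 𝔡 × 𝔡, P p → P q → P (p + q)) ∧
    (∀ (c : ℝ) (p : 𝔡 × 𝔡), P p → P (c • p)) ∧
    -- … closed under the (componentwise) bracket, i.e. a Lie subalgebra of 𝔡̄ ⊕ 𝔡 …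
    (∀ p q : 𝔡 × 𝔡, P p → P q → P (⁅p.1, q.1⁆, ⁅p.2, q.2⁆)) ∧
    -- … and Lagrangian for ⟨(x₁,x₂),(y₁,y₂)⟩ = −⟨x₁,y₁⟩ + ⟨x₂,y₂⟩
    (∀ p : 𝔡 × 𝔡, P p ↔ ∀ q : 𝔡 × 𝔡, P q → -(B p.1 q.1) + B p.2 q.2 = 0) := by
  intro P
  have hB : LinearMap.BilinForm.IsSymm B := ⟨hsymm⟩
  have hnd : B.Nondegenerate := hB.isRefl.nondegenerate_iff_separatingLeft.2 hnondeg
  let 𝔩 := fiberProd 𝔠.toSubmodule (orth B 𝔠.toSubmodule)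
  refine ⟨fun p q => 𝔩.add_mem, fun c p => 𝔩.smul_mem c,
    fun p q => lie_mem_fiberProd fun c hc k hk => lie_mem_orth hinv hc hk, fun p => ?_⟩
  exact ⟨fun hp q hq => isOrtho_of_mem_fiberProd_orth hB hp hq,
    mem_fiberProd_orth_of_isOrtho hco (orth_orth hnd hB.isRefl _)⟩
end

section
/- Let V₁, V₂ be vector spaces with nondegenerate symmetric bilinear forms, and R ⊆ V₂ × V̄₁ a Lagrangian subspace (for the form ⟨(y₂,y₁),(y₂',y₁')⟩ = ⟨y₂,y₂'⟩₂ − ⟨y₁,y₁'⟩₁). Let E₁ ⊆ V₁, E₂ ⊆ V₂ be Lagrangian subspaces such that R ∩ (E₂ × E₁) is the graph of a linear map b: E₂ → E₁ (i.e., for every x₂ ∈ E₂ there is a unique x₁ ∈ E₁ with (x₂,x₁) ∈ R). Let F₂ ⊆ V₂ be a Lagrangian complement to E₂. Then the backward image F₁ = {x₁ ∈ V₁ : ∃ y₂ ∈ F₂, (y₂,x₁) ∈ R} is a Lagrangian subspace of V₁ complementary to E₁, and for each x₁ ∈ F₁ the element y₂ ∈ F₂ with (y₂,x₁) ∈ R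 is unique. -/
/-!
Every `z₁` in the projection of `R` to `V₁` is `e₁ + f₁` with `e₁ ∈ E₁` and `f₁` in the backward
image `F₁` of `F₂` (split the `V₂`-component along `E₂ ⊕ F₂` and subtract the partner of its
`E₂`-part). Hence an `x₁ ∈ E₁` orthogonal to `F₁` is orthogonal to the whole projection of `R`,
so `(0, x₁) ∈ R` because `R` is Lagrangian, and the Dirac condition forces `x₁ = 0`. Thus
`E₁ ∩ F₁^⊥ = 0`; as `E₁` is Lagrangian this makes `(E₁ + F₁)^⊥ = 0`, so `E₁ + F₁ = V₁`, and
since `F₁` is isotropic (it is paired by `R` with the isotropic `F₂`) the modular law gives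
`F₁^⊥ = F₁`.
-/

open Submodule

section Orth

variable {V : Type*} [AddCommGroup V] [Module ℝ V]

theorem mem_orth_iff (B : V →ₗ[ℝ] V →ₗ[ℝ] ℝ) (W : Submodule ℝ V) (x : V) :
    x ∈ orth B W ↔ ∀ w ∈ W, B x w = 0 :=
  Iff.rfl

theorem orth_sup (B : V →ₗ[ℝ] V →ₗ[ℝ] ℝ) (W W' : Submodule ℝ V) :
    orth B (W ⊔ W') = orth B W ⊓ orth B W' := by
  ext x
  simp only [mem_orth_iff, mem_inf]
  refine ⟨fun h => ⟨fun w hw => h w (mem_sup_left hw), fun w hw => h w (mem_sup_right hw)⟩,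
    fun ⟨h, h'⟩ w hw => ?_⟩
  obtain ⟨a, ha, b, hb, rfl⟩ := mem_sup.mp hw
  rw [map_add, h a ha, h' b hb, add_zero]

theorem eq_top_of_orth_eq_bot [FiniteDimensional ℝ V] {B : V →ₗ[ℝ] V →ₗ[ℝ] ℝ}
    {W : Submodule ℝ V} (h : orth B W = ⊥) : W = ⊤ := by
  have hinj : Function.Injective (W.subtype.dualMap ∘ₗ B) := by
    rw [← LinearMap.ker_eq_bot, ← h]
    ext x
    simp [mem_orth_iff, LinearMap.ext_iff]
  refine eq_top_of_finrank_eq (le_antisymm (finrank_le W) ?_)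
  exact (LinearMap.finrank_le_finrank_of_injective hinj).trans_eq Subspace.dual_finrank_eq

end Orth

section Relation

variable {V₁ V₂ : Type*} [AddCommGroup V₁] [Module ℝ V₁] [AddCommGroup V₂] [Module ℝ V₂]

def diffForm (B₂ : V₂ →ₗ[ℝ] V₂ →ₗ[ℝ] ℝ) (B₁ : V₁ →ₗ[ℝ] V₁ →ₗ[ℝ] ℝ) :
    (V₂ × V₁) →ₗ[ℝ] (V₂ × V₁) →ₗ[ℝ] ℝ :=
  B₂.compl₁₂ (LinearMap.fst ℝ V₂ V₁) (LinearMap.fst ℝ V₂ V₁) -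
    B₁.compl₁₂ (LinearMap.snd ℝ V₂ V₁) (LinearMap.snd ℝ V₂ V₁)

@[simp]
theorem diffForm_apply (B₂ : V₂ →ₗ[ℝ] V₂ →ₗ[ℝ] ℝ) (B₁ : V₁ →ₗ[ℝ] V₁ →ₗ[ℝ] ℝ)
    (p q : V₂ × V₁) : diffForm B₂ B₁ p q = B₂ p.1 q.1 - B₁ p.2 q.2 :=
  rfl

def backwardImage (R : Submodule ℝ (V₂ × V₁)) (F : Submodule ℝ V₂) : Submodule ℝ V₁ :=
  (R ⊓ F.prod ⊤).map (LinearMap.snd ℝ V₂ V₁)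

theorem mem_backwardImage {R : Submodule ℝ (V₂ × V₁)} {F : Submodule ℝ V₂} {x : V₁} :
    x ∈ backwardImage R F ↔ ∃ y ∈ F, (y, x) ∈ R := by
  constructor
  · rintro ⟨⟨y, x⟩, ⟨hR, hF, -⟩, rfl⟩
    exact ⟨y, hF, hR⟩
  · rintro ⟨y, hF, hR⟩
    exact ⟨(y, x), ⟨hR, hF, trivial⟩, rfl⟩

variable {B₁ : V₁ →ₗ[ℝ] V₁ →ₗ[ℝ] ℝ} {B₂ : V₂ →ₗ[ℝ] V₂ →ₗ[ℝ] ℝ} {R : Submodule ℝ (V₂ × V₁)}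
  {E₁ : Submodule ℝ V₁} {E₂ F₂ : Submodule ℝ V₂}

theorem apply_fst_eq_apply_snd (hR : R ≤ orth (diffForm B₂ B₁) R) {p q : V₂ × V₁}
    (hp : p ∈ R) (hq : q ∈ R) : B₂ p.1 q.1 = B₁ p.2 q.2 :=
  sub_eq_zero.mp (hR hp q hq)

theorem backwardImage_le_orth (hR : R ≤ orth (diffForm B₂ B₁) R) (hF : F₂ ≤ orth B₂ F₂) :
    backwardImage R F₂ ≤ orth B₁ (backwardImage R F₂) := by
  intro x hx z hz
  obtain ⟨y, hy, hyx⟩ := mem_backwardImage.mp hx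
  obtain ⟨w, hw, hwz⟩ := mem_backwardImage.mp hz
  rw [← hF hy w hw]
  exact (apply_fst_eq_apply_snd hR hyx hwz).symm

theorem map_snd_le_sup_backwardImage (hsurj : ∀ x₂ ∈ E₂, ∃ x₁ ∈ E₁, (x₂, x₁) ∈ R)
    (hsup : E₂ ⊔ F₂ = ⊤) : R.map (LinearMap.snd ℝ V₂ V₁) ≤ E₁ ⊔ backwardImage R F₂ := by
  rintro _ ⟨⟨z₂, z₁⟩, hz, rfl⟩
  obtain ⟨e₂, he₂, f₂, hf₂, rfl⟩ := mem_sup.mp (hsup ▸ mem_top : z₂ ∈ E₂ ⊔ F₂)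
  obtain ⟨e₁, he₁, he⟩ := hsurj e₂ he₂
  have hf : (f₂, z₁ - e₁) ∈ R := by simpa using R.sub_mem hz he
  exact mem_sup.mpr ⟨e₁, he₁, z₁ - e₁, mem_backwardImage.mpr ⟨f₂, hf₂, hf⟩, by abel⟩

theorem inf_orth_backwardImage_eq_bot (hR : orth (diffForm B₂ B₁) R ≤ R)
    (hE₁ : E₁ ≤ orth B₁ E₁) (hsurj : ∀ x₂ ∈ E₂, ∃ x₁ ∈ E₁, (x₂, x₁) ∈ R)
    (hker : ∀ x₁ ∈ E₁, ((0 : V₂), x₁) ∈ R → x₁ = 0) (hsup : E₂ ⊔ F₂ = ⊤) :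
    E₁ ⊓ orth B₁ (backwardImage R F₂) = ⊥ := by
  refine eq_bot_iff.mpr fun x ⟨hxE, hxF⟩ => (mem_bot ℝ).mpr (hker x hxE (hR ?_))
  have hx : x ∈ orth B₁ (E₁ ⊔ backwardImage R F₂) := by
    rw [orth_sup]
    exact ⟨hE₁ hxE, hxF⟩
  rintro ⟨z₂, z₁⟩ hz
  simpa using hx z₁ (map_snd_le_sup_backwardImage hsurj hsup ⟨_, hz, rfl⟩)

theorem sup_backwardImage_eq_top [FiniteDimensional ℝ V₁] (hR : orth (diffForm B₂ B₁) R ≤ R)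
    (hE₁ : orth B₁ E₁ = E₁) (hsurj : ∀ x₂ ∈ E₂, ∃ x₁ ∈ E₁, (x₂, x₁) ∈ R)
    (hker : ∀ x₁ ∈ E₁, ((0 : V₂), x₁) ∈ R → x₁ = 0) (hsup : E₂ ⊔ F₂ = ⊤) :
    E₁ ⊔ backwardImage R F₂ = ⊤ :=
  eq_top_of_orth_eq_bot <| by
    rw [orth_sup, hE₁, inf_orth_backwardImage_eq_bot hR hE₁.ge hsurj hker hsup]

theorem mem_orth_of_mk_zero_mem (hR : R ≤ orth (diffForm B₂ B₁) R)
    (hsurj : ∀ x₂ ∈ E₂, ∃ x₁ ∈ E₁, (x₂, x₁) ∈ R) {d : V₂} (hd : (d, (0 : V₁)) ∈ R) :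
    d ∈ orth B₂ E₂ := by
  intro e he
  obtain ⟨e₁, -, he⟩ := hsurj e he
  simpa using apply_fst_eq_apply_snd hR hd he

theorem existsUnique_of_mem_backwardImage (hR : R ≤ orth (diffForm B₂ B₁) R)
    (hsurj : ∀ x₂ ∈ E₂, ∃ x₁ ∈ E₁, (x₂, x₁) ∈ R) (hE₂ : orth B₂ E₂ ≤ E₂) (hinf : E₂ ⊓ F₂ = ⊥)
    {x : V₁} (hx : x ∈ backwardImage R F₂) : ∃! y, y ∈ F₂ ∧ (y, x) ∈ R := by
  obtain ⟨y, hy, hyx⟩ := mem_backwardImage.mp hx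
  refine ⟨y, ⟨hy, hyx⟩, fun w ⟨hw, hwx⟩ => ?_⟩
  have hd : (w - y, (0 : V₁)) ∈ R := by simpa using R.sub_mem hwx hyx
  have hwy : w - y ∈ E₂ ⊓ F₂ := ⟨hE₂ (mem_orth_of_mk_zero_mem hR hsurj hd), F₂.sub_mem hw hy⟩
  rw [hinf, mem_bot] at hwy
  exact sub_eq_zero.mp hwy

end Relation

theorem stmt19_general (V₁ V₂ : Type*)
    [AddCommGroup V₁] [Module ℝ V₁] [FiniteDimensional ℝ V₁]
    [AddCommGroup V₂] [Module ℝ V₂]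
    (B₁ : V₁ →ₗ[ℝ] V₁ →ₗ[ℝ] ℝ)
    (B₂ : V₂ →ₗ[ℝ] V₂ →ₗ[ℝ] ℝ)
    -- R is a Lagrangian subspace of V₂ × V̄₁
    (R : Submodule ℝ (V₂ × V₁))
    (hRLag : ∀ p : V₂ × V₁, p ∈ R ↔ ∀ q ∈ R, B₂ p.1 q.1 - B₁ p.2 q.2 = 0)
    -- E₁, E₂ Lagrangian
    (E₁ : Submodule ℝ V₁) (hE₁ : orth B₁ E₁ = E₁)
    (E₂ : Submodule ℝ V₂) (hE₂ : orth B₂ E₂ = E₂)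
    -- Dirac morphism condition: R ∩ (E₂ × E₁) is the graph of a map E₂ → E₁
    (hDirac : ∀ x₂ ∈ E₂, ∃! x₁ : V₁, x₁ ∈ E₁ ∧ (x₂, x₁) ∈ R)
    -- F₂ a Lagrangian complement to E₂
    (F₂ : Submodule ℝ V₂) (hF₂ : orth B₂ F₂ = F₂)
    (hc₁ : E₂ ⊓ F₂ = ⊥) (hc₂ : E₂ ⊔ F₂ = ⊤) :
    let F₁ : Set V₁ := {x₁ | ∃ y₂ ∈ F₂, (y₂, x₁) ∈ R}
    -- F₁ is Lagrangian …
    (∀ x₁ : V₁, x₁ ∈ F₁ ↔ ∀ z₁ ∈ F₁, B₁ x₁ z₁ = 0) ∧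
    -- … complementary to E₁ …
    (∀ x₁ ∈ F₁, x₁ ∈ E₁ → x₁ = 0) ∧
    (∀ x : V₁, ∃ a ∈ F₁, ∃ b ∈ E₁, x = a + b) ∧
    -- … and each x₁ ∈ F₁ is R-related to a unique y₂ ∈ F₂
    (∀ x₁ ∈ F₁, ∃! y₂ : V₂, y₂ ∈ F₂ ∧ (y₂, x₁) ∈ R) := by
  intro F₁
  have hR : orth (diffForm B₂ B₁) R = R := SetLike.ext fun p => (hRLag p).symm
  have hsurj : ∀ x₂ ∈ E₂, ∃ x₁ ∈ E₁, (x₂, x₁) ∈ R := fun x₂ hx₂ =>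
    (hDirac x₂ hx₂).exists
  have hker : ∀ x₁ ∈ E₁, ((0 : V₂), x₁) ∈ R → x₁ = 0 := fun x₁ hx₁ h0 =>
    (hDirac 0 E₂.zero_mem).unique ⟨hx₁, h0⟩ ⟨E₁.zero_mem, R.zero_mem⟩
  have hF₁ : F₁ = backwardImage R F₂ := Set.ext fun x => mem_backwardImage.symm
  have hiso := backwardImage_le_orth hR.ge hF₂.ge
  have hdisj := inf_orth_backwardImage_eq_bot hR.le hE₁.ge hsurj hker hc₂
  have htop := sup_backwardImage_eq_top hR.le hE₁ hsurj hker hc₂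
  have hLag : orth B₁ (backwardImage R F₂) = backwardImage R F₂ :=
    (eq_of_le_of_inf_le_of_sup_le hiso (by rw [inf_comm, hdisj]; exact bot_le)
      (by rw [sup_comm (backwardImage R F₂), htop]; exact le_top)).symm
  simp only [hF₁, SetLike.mem_coe]
  refine ⟨fun x => (SetLike.ext_iff.mp hLag x).symm, fun x hx hxE => ?_, fun x => ?_,
    fun x => existsUnique_of_mem_backwardImage hR.ge hsurj hE₂.le hc₁⟩
  · have hx' : x ∈ E₁ ⊓ orth B₁ (backwardImage R F₂) := ⟨hxE, hiso hx⟩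
    rwa [hdisj, mem_bot] at hx'
  · obtain ⟨b, hb, a, ha, hab⟩ := mem_sup.mp (htop ▸ mem_top : x ∈ E₁ ⊔ backwardImage R F₂)
    exact ⟨a, ha, b, hb, by rw [← hab, add_comm]⟩

/-- Backward image of a Lagrangian complement under a linear Dirac
morphism: R ⊆ V₂ × V̄₁ Lagrangian (for B₂ ⊖ B₁), E₁, E₂ Lagrangian with R ∩ (E₂ × E₁) the
graph of a map E₂ → E₁, and F₂ a Lagrangian complement of E₂.  Then the backward image
F₁ = {x₁ : ∃ y₂ ∈ F₂, (y₂,x₁) ∈ R} is a Lagrangian subspace complementary to E₁, and the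
element y₂ ∈ F₂ related to a given x₁ ∈ F₁ is unique. -/
theorem stmt19 (V₁ V₂ : Type*)
    [AddCommGroup V₁] [Module ℝ V₁] [FiniteDimensional ℝ V₁]
    [AddCommGroup V₂] [Module ℝ V₂] [FiniteDimensional ℝ V₂]
    (B₁ : V₁ →ₗ[ℝ] V₁ →ₗ[ℝ] ℝ)
    (h₁symm : ∀ x y : V₁, B₁ x y = B₁ y x)
    (h₁nondeg : ∀ x : V₁, (∀ y : V₁, B₁ x y = 0) → x = 0)
    (B₂ : V₂ →ₗ[ℝ] V₂ →ₗ[ℝ] ℝ)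
    (h₂symm : ∀ x y : V₂, B₂ x y = B₂ y x)
    (h₂nondeg : ∀ x : V₂, (∀ y : V₂, B₂ x y = 0) → x = 0)
    -- R is a Lagrangian subspace of V₂ × V̄₁
    (R : Submodule ℝ (V₂ × V₁))
    (hRLag : ∀ p : V₂ × V₁, p ∈ R ↔ ∀ q ∈ R, B₂ p.1 q.1 - B₁ p.2 q.2 = 0)
    -- E₁, E₂ Lagrangian
    (E₁ : Submodule ℝ V₁) (hE₁ : orth B₁ E₁ = E₁)
    (E₂ : Submodule ℝ V₂) (hE₂ : orth B₂ E₂ = E₂)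
    -- Dirac morphism condition: R ∩ (E₂ × E₁) is the graph of a map E₂ → E₁
    (hDirac : ∀ x₂ ∈ E₂, ∃! x₁ : V₁, x₁ ∈ E₁ ∧ (x₂, x₁) ∈ R)
    -- F₂ a Lagrangian complement to E₂
    (F₂ : Submodule ℝ V₂) (hF₂ : orth B₂ F₂ = F₂)
    (hc₁ : E₂ ⊓ F₂ = ⊥) (hc₂ : E₂ ⊔ F₂ = ⊤) :
    let F₁ : Set V₁ := {x₁ | ∃ y₂ ∈ F₂, (y₂, x₁) ∈ R}
    -- F₁ is Lagrangian …
    (∀ x₁ : V₁, x₁ ∈ F₁ ↔ ∀ z₁ ∈ F₁, B₁ x₁ z₁ = 0) ∧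
    -- … complementary to E₁ …
    (∀ x₁ ∈ F₁, x₁ ∈ E₁ → x₁ = 0) ∧
    (∀ x : V₁, ∃ a ∈ F₁, ∃ b ∈ E₁, x = a + b) ∧
    -- … and each x₁ ∈ F₁ is R-related to a unique y₂ ∈ F₂
    (∀ x₁ ∈ F₁, ∃! y₂ : V₂, y₂ ∈ F₂ ∧ (y₂, x₁) ∈ R) :=
  stmt19_general V₁ V₂ B₁ B₂ R hRLag E₁ hE₁ E₂ hE₂ hDirac F₂ hF₂ hc₁ hc₂
end
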